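/- Let f : ℝⁿ × ℝᵐ → ℝⁿ and φ : ℝⁿ × ℝᵐ → ℝᵐ be continuously differentiable, and let u : ℝⁿ → ℝᵐ be continuously differentiable with φ(q, u(q)) = 0 for all q ∈ ℝⁿ and D_uφ(q, u(q)) invertible for all q ∈ ℝⁿ. Define λ : ℝⁿ × ℝⁿ → ℝᵐ by λ(q,p) = −( D_uφ(q,u(q))ᵀ )⁻¹ D_uf(q,u(q))ᵀ p. Suppose (q,p) : [t₀,t₁] → ℝⁿ × ℝⁿ is a continuously differentiable solution of the reduced Hamiltonian system q̇ = f(q, u(q)), ṗ = −D_qf(q,u(q))ᵀ p − Du(q)ᵀ D_uf(q,u(q))ᵀ p. Then the curve t ↦ (q(t), u(q(t)), p(t), λ(q(t),p(t))) satisfies all four equations of the adjoint DAE system: q̇ = f(q,u), ṗ = −D_qf(q,u)ᵀ p − D_qφ(q,u)ᵀ λ, 0 = φ(q,u), and 0 = D_uf(q,u)ᵀ p + D_uφ(q,u)ᵀ λ. -/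

import Mathlib

open scoped RealInnerProductSpace

noncomputable section

abbrev Euc (n : ℕ) : Type := EuclideanSpace ℝ (Fin n)

/-- Partial Jacobian `D_qF(q,u)` with respect to the first argument. -/
noncomputable def Dq {n m k : ℕ} (F : Euc n × Euc m → Euc k) (q : Euc n) (u : Euc m) :
    Euc n →L[ℝ] Euc k :=
  fderiv ℝ (fun q' => F (q', u)) q

/-- Partial Jacobian `D_uF(q,u)` with respect to the second argument. -/
noncomputable def Du {n m k : ℕ} (F : Euc n × Euc m → Euc k) (q : Euc n) (u : Euc m) :
    Euc m →L[ℝ] Euc k :=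
  fderiv ℝ (fun u' => F (q, u')) u

/-- `D_qF(q,u)ᵀ`, the transpose (adjoint) of the partial Jacobian in `q`. -/
noncomputable def DqT {n m k : ℕ} (F : Euc n × Euc m → Euc k) (q : Euc n) (u : Euc m) :
    Euc k →L[ℝ] Euc n :=
  ContinuousLinearMap.adjoint (Dq F q u)

/-- `D_uF(q,u)ᵀ`, the transpose (adjoint) of the partial Jacobian in `u`. -/
noncomputable def DuT {n m k : ℕ} (F : Euc n × Euc m → Euc k) (q : Euc n) (u : Euc m) :
    Euc k →L[ℝ] Euc m :=
  ContinuousLinearMap.adjoint (Du F q u)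

/-- Partial gradient `∇_qL(q,u)`. -/
noncomputable def gradQ {n m : ℕ} (L : Euc n × Euc m → ℝ) (q : Euc n) (u : Euc m) : Euc n :=
  gradient (fun q' => L (q', u)) q

/-- Partial gradient `∇_uL(q,u)`. -/
noncomputable def gradU {n m : ℕ} (L : Euc n × Euc m → ℝ) (q : Euc n) (u : Euc m) : Euc m :=
  gradient (fun u' => L (q, u')) u

/-!
Differentiating the constraint `φ (q, u q) = 0` gives `D_qφ = -D_uφ ∘ Du`, hence
`D_qφᵀ λ = -Duᵀ (D_uφᵀ λ) = Duᵀ (D_ufᵀ p)` by the choice of `λ` (`D_uφᵀ` is invertible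
because `D_uφ` is). So the reduced costate equation is the adjoint one, and the algebraic equation
`D_ufᵀ p + D_uφᵀ λ = 0` is the definition of `λ`.
-/

open scoped InnerProduct

namespace ContinuousLinearMap

theorem isInvertible_of_bijective {𝕜 E F : Type*} [NontriviallyNormedField 𝕜]
    [NormedAddCommGroup E] [NormedSpace 𝕜 E] [CompleteSpace E]
    [NormedAddCommGroup F] [NormedSpace 𝕜 F] [CompleteSpace F]
    {A : E →L[𝕜] F} (hA : Function.Bijective A) : A.IsInvertible :=
  ⟨.ofBijective A (LinearMap.ker_eq_bot.mpr hA.injective)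
    (LinearMap.range_eq_top.mpr hA.surjective), rfl⟩

theorem IsInvertible.adjoint {𝕜 E F : Type*} [RCLike 𝕜]
    [NormedAddCommGroup E] [InnerProductSpace 𝕜 E] [CompleteSpace E]
    [NormedAddCommGroup F] [InnerProductSpace 𝕜 F] [CompleteSpace F]
    {A : E →L[𝕜] F} (hA : A.IsInvertible) : A†.IsInvertible := by
  obtain ⟨e, rfl⟩ := hA
  refine .of_inverse (g := (e.symm : F →L[𝕜] E)†) ?_ ?_ <;>
    simp [← adjoint_comp, adjoint_id]

end ContinuousLinearMap

section ImplicitDifferentiation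

variable {𝕜 E F G : Type*} [NontriviallyNormedField 𝕜]
  [NormedAddCommGroup E] [NormedSpace 𝕜 E] [NormedAddCommGroup F] [NormedSpace 𝕜 F]
  [NormedAddCommGroup G] [NormedSpace 𝕜 G]
  {φ : E × F → G} {x : E} {y : F}

theorem DifferentiableAt.hasFDerivAt_partial_fst (hφ : DifferentiableAt 𝕜 φ (x, y)) :
    HasFDerivAt (fun x' => φ (x', y)) (fderiv 𝕜 φ (x, y) ∘L .inl 𝕜 E F) x :=
  hφ.hasFDerivAt.comp x (hasFDerivAt_prodMk_left x y)

theorem DifferentiableAt.hasFDerivAt_partial_snd (hφ : DifferentiableAt 𝕜 φ (x, y)) :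
    HasFDerivAt (fun y' => φ (x, y')) (fderiv 𝕜 φ (x, y) ∘L .inr 𝕜 E F) y :=
  hφ.hasFDerivAt.comp y (hasFDerivAt_prodMk_right x y)

theorem fderiv_partial_fst_add_partial_snd_comp_eq_zero {g : E → F}
    (hφ : DifferentiableAt 𝕜 φ (x, g x)) (hg : DifferentiableAt 𝕜 g x)
    (hzero : ∀ x', φ (x', g x') = 0) :
    fderiv 𝕜 (fun x' => φ (x', g x)) x
      + fderiv 𝕜 (fun y' => φ (x, y')) (g x) ∘L fderiv 𝕜 g x = 0 := by
  have htotal : HasFDerivAt (fun x' => φ (x', g x'))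
      (fderiv 𝕜 φ (x, g x) ∘L (ContinuousLinearMap.id 𝕜 E).prod (fderiv 𝕜 g x)) x :=
    hφ.hasFDerivAt.comp x ((hasFDerivAt_id x).prodMk hg.hasFDerivAt)
  have hconst : HasFDerivAt (fun x' => φ (x', g x')) (0 : E →L[𝕜] G) x := by
    simpa only [hzero] using hasFDerivAt_const (0 : G) x
  rw [hφ.hasFDerivAt_partial_fst.fderiv, hφ.hasFDerivAt_partial_snd.fderiv, ← htotal.unique hconst]
  ext v
  simp [← map_add]

end ImplicitDifferentiation

theorem DqT_eq_neg_adjoint_comp_DuT {n m k : ℕ} {φ : Euc n × Euc m → Euc k} {g : Euc n → Euc m}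
    {x : Euc n} (hφ : DifferentiableAt ℝ φ (x, g x)) (hg : DifferentiableAt ℝ g x)
    (hzero : ∀ x', φ (x', g x') = 0) :
    DqT φ x (g x) = -((fderiv ℝ g x)† ∘L DuT φ x (g x)) := by
  have hDq := eq_neg_of_add_eq_zero_left
    (fderiv_partial_fst_add_partial_snd_comp_eq_zero hφ hg hzero)
  rw [DqT, Dq, hDq, map_neg, ContinuousLinearMap.adjoint_comp]
  rfl

theorem reduction_solves_adjoint_DAE_general {n m : ℕ}
    (f : Euc n × Euc m → Euc n) (φ : Euc n × Euc m → Euc m)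
    (hφ : ContDiff ℝ 1 φ)
    (ufun : Euc n → Euc m) (hufun : ContDiff ℝ 1 ufun)
    (hconstr : ∀ x : Euc n, φ (x, ufun x) = 0)
    (hinv : ∀ x : Euc n, Function.Bijective (Du φ x (ufun x)))
    (lamfun : Euc n → Euc n → Euc m)
    (hlamfun : ∀ (x : Euc n) (y : Euc n),
      lamfun x y = -(ContinuousLinearMap.inverse (DuT φ x (ufun x)) (DuT f x (ufun x) y)))
    (t₀ t₁ : ℝ) (q p : ℝ → Euc n)
    (hqode : ∀ t ∈ Set.Icc t₀ t₁, HasDerivAt q (f (q t, ufun (q t))) t)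
    (hpode : ∀ t ∈ Set.Icc t₀ t₁,
      HasDerivAt p (-(DqT f (q t) (ufun (q t)) (p t))
        - ContinuousLinearMap.adjoint (fderiv ℝ ufun (q t))
            (DuT f (q t) (ufun (q t)) (p t))) t) :
    ∀ t ∈ Set.Icc t₀ t₁,
      HasDerivAt q (f (q t, ufun (q t))) t ∧
      HasDerivAt p (-(DqT f (q t) (ufun (q t)) (p t))
        - DqT φ (q t) (ufun (q t)) (lamfun (q t) (p t))) t ∧
      φ (q t, ufun (q t)) = 0 ∧
      DuT f (q t) (ufun (q t)) (p t)
        + DuT φ (q t) (ufun (q t)) (lamfun (q t) (p t)) = 0 := by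
  intro t ht
  have hmultiplier : DuT φ (q t) (ufun (q t)) (lamfun (q t) (p t))
      = -DuT f (q t) (ufun (q t)) (p t) := by
    rw [hlamfun, map_neg]
    exact congrArg Neg.neg
      ((ContinuousLinearMap.isInvertible_of_bijective (hinv _)).adjoint.self_apply_inverse _)
  have hDqT := DqT_eq_neg_adjoint_comp_DuT (x := q t) (hφ.differentiable one_ne_zero _)
    (hufun.differentiable one_ne_zero _) hconstr
  refine ⟨hqode t ht, ?_, hconstr (q t), by rw [hmultiplier, add_neg_cancel]⟩
  rw [hDqT, neg_apply, ContinuousLinearMap.comp_apply, hmultiplier,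
    map_neg, sub_neg_eq_add, ← sub_eq_add_neg]
  exact hpode t ht

/-- given a reduction `u = u(q)` of the index-1 constraint and the induced
multiplier `λ(q,p) = −(D_uφ(q,u(q))ᵀ)⁻¹ D_uf(q,u(q))ᵀ p`, every solution of the reduced
Hamiltonian system lifts to a solution of the full adjoint DAE system. -/
theorem reduction_solves_adjoint_DAE {n m : ℕ}
    (f : Euc n × Euc m → Euc n) (φ : Euc n × Euc m → Euc m)
    (hf : ContDiff ℝ 1 f) (hφ : ContDiff ℝ 1 φ)
    (ufun : Euc n → Euc m) (hufun : ContDiff ℝ 1 ufun)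
    (hconstr : ∀ x : Euc n, φ (x, ufun x) = 0)
    (hinv : ∀ x : Euc n, Function.Bijective (Du φ x (ufun x)))
    (lamfun : Euc n → Euc n → Euc m)
    (hlamfun : ∀ (x : Euc n) (y : Euc n),
      lamfun x y = -(ContinuousLinearMap.inverse (DuT φ x (ufun x)) (DuT f x (ufun x) y)))
    (t₀ t₁ : ℝ) (q p : ℝ → Euc n)
    (hq : ContDiff ℝ 1 q) (hp : ContDiff ℝ 1 p)
    (hqode : ∀ t ∈ Set.Icc t₀ t₁, HasDerivAt q (f (q t, ufun (q t))) t)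
    (hpode : ∀ t ∈ Set.Icc t₀ t₁,
      HasDerivAt p (-(DqT f (q t) (ufun (q t)) (p t))
        - ContinuousLinearMap.adjoint (fderiv ℝ ufun (q t))
            (DuT f (q t) (ufun (q t)) (p t))) t) :
    ∀ t ∈ Set.Icc t₀ t₁,
      HasDerivAt q (f (q t, ufun (q t))) t ∧
      HasDerivAt p (-(DqT f (q t) (ufun (q t)) (p t))
        - DqT φ (q t) (ufun (q t)) (lamfun (q t) (p t))) t ∧
      φ (q t, ufun (q t)) = 0 ∧
      DuT f (q t) (ufun (q t)) (p t)
        + DuT φ (q t) (ufun (q t)) (lamfun (q t) (p t)) = 0 :=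
  reduction_solves_adjoint_DAE_general f φ hφ ufun hufun hconstr hinv lamfun hlamfun t₀ t₁ q p hqode
    hpode

end
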